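/- Let W = W(Γ) be the right-angled Coxeter group of a simple graph Γ with word length ℓ. Let C₂ be a finite set of pairwise adjacent vertices of Γ and let C₁ ⊆ C₂; write r₁ = ∏_{v ∈ C₁} s_v and r₂ = ∏_{v ∈ C₂} s_v. Let x, g ∈ W satisfy ℓ(x·r₂) = ℓ(x) − |C₂| and ℓ(x·r₂) = ℓ(g) + ℓ(g·x·r₂). Then ℓ(x·r₁) = ℓ(x) − |C₁| and ℓ(x·r₁) = ℓ(g) + ℓ(g·x·r₁). -/

import Mathlib

/-!
Counting the occurrences of a fixed generator modulo 2 is a homomorphism on a right-angled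
Coxeter group, so a word without repeated letters is reduced; in particular
`ℓ(r_C) = |C|` for every clique `C`. Write `r₂ = r₁ r'` with `r'` the clique word of
`C₂ \ C₁`.
The triangle inequality gives `ℓ x ≤ ℓ(x r₁) + |C₁| ≤ ℓ(x r₂) + |C₂| = ℓ x` and
`ℓ(x r₁) ≤ ℓ g + ℓ(g x r₁) ≤ ℓ g + ℓ(g x r₂) + |C₂ \ C₁| = ℓ(x r₁)`,
so all these inequalities are equalities.
-/

namespace RACG

variable {V : Type*} [DecidableEq V]

/-- The right-angled Coxeter matrix of a simple graph `G`: diagonal entries are `1`,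
entries at adjacent pairs are `2` (the generators commute), and entries at distinct
non-adjacent pairs are `0` (representing `∞`, i.e. no relation). -/
def racgMatrix (G : SimpleGraph V) [DecidableRel G.Adj] : CoxeterMatrix V where
  M a b := if a = b then 1 else if G.Adj a b then 2 else 0
  isSymm := by
    refine Matrix.ext fun a b => ?_
    show (if b = a then 1 else if G.Adj b a then 2 else 0) =
      (if a = b then 1 else if G.Adj a b then 2 else 0)
    by_cases h : a = b
    · subst h; rfl
    · rw [if_neg h, if_neg (Ne.symm h)]
      by_cases hadj : G.Adj a b
      · rw [if_pos hadj, if_pos hadj.symm]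
      · rw [if_neg hadj, if_neg (fun h' => hadj h'.symm)]
  diagonal := fun i => by simp
  off_diagonal := fun i i' h => by
    beta_reduce
    rw [if_neg h]
    by_cases hadj : G.Adj i i' <;> simp [hadj]

variable {G : SimpleGraph V} [DecidableRel G.Adj] {W : Type*} [Group W]

/-- In the right-angled Coxeter group of `G`, the simple reflections at adjacent
vertices commute. -/
theorem simple_commute_of_adj (cs : CoxeterSystem (racgMatrix G) W) {a b : V}
    (h : G.Adj a b) : Commute (cs.simple a) (cs.simple b) := by
  have hM : (racgMatrix G) a b = 2 := by
    simp only [racgMatrix, if_neg h.ne, if_pos h]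
  have h2 := cs.simple_mul_simple_pow a b
  rw [hM, pow_two] at h2
  have h3 := mul_eq_one_iff_eq_inv.mp h2
  rwa [mul_inv_rev, cs.inv_simple, cs.inv_simple] at h3

/-- The clique word associated to a finite set `C` of pairwise adjacent vertices:
the product of the simple reflections at the vertices of `C` (in any order; these
commute). If `C` is not a clique, we set the value to `1` by convention. -/
noncomputable def cliqueWord (cs : CoxeterSystem (racgMatrix G) W) (C : Finset V) : W :=
  if h : (C : Set V).Pairwise G.Adj then
    C.noncommProd (fun v => cs.simple v)
      (fun _ ha _ hb hab => simple_commute_of_adj cs (h ha hb hab))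
  else 1

/-- `w` is a clique word if it is the product of the simple reflections over a finite
set of pairwise adjacent vertices. -/
def IsCliqueWord (cs : CoxeterSystem (racgMatrix G) W) (w : W) : Prop :=
  ∃ C : Finset V, (C : Set V).Pairwise G.Adj ∧ w = cliqueWord cs C

end RACG

namespace CoxeterSystem

variable {B : Type*} {M : CoxeterMatrix B} {W : Type*} [Group W] (cs : CoxeterSystem M W)

theorem length_mul_add_length_eq_of_eq_sub {w u : W}
    (h : cs.length (w * u) = cs.length w - cs.length u) :
    cs.length (w * u) + cs.length u = cs.length w := by
  have := cs.length_le_length_mul_add_left w u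
  have := cs.length_le_length_mul_add_right w u
  omega

theorem length_mul_add_length_eq_of_mul_mul {w a b : W}
    (hab : cs.length (a * b) = cs.length a + cs.length b)
    (h : cs.length (w * a * b) + cs.length (a * b) = cs.length w) :
    cs.length (w * a) + cs.length a = cs.length w ∧
      cs.length (w * a * b) + cs.length b = cs.length (w * a) := by
  have := cs.length_le_length_mul_add_right w a
  have := cs.length_le_length_mul_add_right (w * a) b
  omega

theorem length_eq_add_length_mul_of_length_mul_eq_add {w u g : W}
    (h : cs.length (w * u) + cs.length u = cs.length w)
    (hg : cs.length (w * u) = cs.length g + cs.length (g * w * u)) :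
    cs.length w = cs.length g + cs.length (g * w) := by
  have := cs.length_le_length_mul_add_left g w
  have := cs.length_le_length_mul_add_right (g * w) u
  omega

end CoxeterSystem

namespace RACG

variable {V : Type*} [DecidableEq V] {G : SimpleGraph V} [DecidableRel G.Adj]
  {W : Type*} [Group W] (cs : CoxeterSystem (racgMatrix G) W)

theorem even_racgMatrix_of_ne {a b : V} (h : a ≠ b) : Even (racgMatrix G a b) := by
  simp only [racgMatrix, if_neg h]
  split_ifs <;> decide

-- Counts occurrences of `s u` modulo 2; well defined since each relation
-- `(s a * s b) ^ M a b = 1` contains every generator an even number of times.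
noncomputable def vertexParity (u : V) : W →* Multiplicative (ZMod 2) :=
  cs.lift ⟨fun v => if v = u then .ofAdd 1 else 1, fun a b => by
    have sq_eq_one : ∀ x : Multiplicative (ZMod 2), x ^ 2 = 1 := by decide
    by_cases hab : a = b
    · subst hab
      rw [(racgMatrix G).diagonal, pow_one, ← sq, sq_eq_one]
    · obtain ⟨k, hk⟩ := even_racgMatrix_of_ne (G := G) hab
      rw [hk, ← two_mul, pow_mul, sq_eq_one, one_pow]⟩

theorem vertexParity_simple (u v : V) :
    vertexParity cs u (cs.simple v) = if v = u then .ofAdd 1 else 1 :=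
  cs.lift_apply_simple _ v

theorem vertexParity_wordProd (u : V) (ω : List V) :
    vertexParity cs u (cs.wordProd ω) = .ofAdd (ω.count u : ZMod 2) := by
  induction ω with
  | nil => simp
  | cons v ω ih =>
    rw [cs.wordProd_cons, map_mul, ih, vertexParity_simple, List.count_cons, Nat.cast_add,
    ofAdd_add, mul_comm]
    split_ifs <;> simp_all

theorem count_cast_eq_of_wordProd_eq {ω ω' : List V} (h : cs.wordProd ω = cs.wordProd ω')
    (u : V) : (ω.count u : ZMod 2) = ω'.count u := by
  simpa [vertexParity_wordProd] using congrArg (vertexParity cs u) h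

theorem isReduced_of_nodup {ω : List V} (hω : ω.Nodup) : cs.IsReduced ω := by
  obtain ⟨ω', hω', heq⟩ := cs.exists_isReduced (cs.wordProd ω)
  have hsub : ω.toFinset ⊆ ω'.toFinset := by
    intro u hu
    rw [List.mem_toFinset] at hu ⊢
    by_contra hu'
    have h := count_cast_eq_of_wordProd_eq cs heq u
    rw [List.count_eq_one_of_mem hω hu, List.count_eq_zero_of_not_mem hu'] at h
    exact absurd h (by decide)
  refine le_antisymm (cs.length_wordProd_le ω) ?_
  calc ω.length = ω.toFinset.card := (List.toFinset_card_of_nodup hω).symm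
    _ ≤ ω'.toFinset.card := Finset.card_le_card hsub
    _ ≤ ω'.length := ω'.toFinset_card_le
    _ = cs.length (cs.wordProd ω) := by rw [heq, hω'.eq]

theorem cliqueWord_eq_wordProd_toList {C : Finset V} (hC : (C : Set V).Pairwise G.Adj) :
    cliqueWord cs C = cs.wordProd C.toList := by
  rw [cliqueWord, dif_pos hC]
  exact (Finset.noncommProd_congr C.toList_toFinset.symm (fun _ _ => rfl) _).trans
    (Finset.noncommProd_toFinset _ _ _ C.nodup_toList)

theorem length_cliqueWord {C : Finset V} (hC : (C : Set V).Pairwise G.Adj) :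
    cs.length (cliqueWord cs C) = C.card := by
  rw [cliqueWord_eq_wordProd_toList cs hC, (isReduced_of_nodup cs C.nodup_toList).eq,
    C.length_toList]

theorem cliqueWord_eq_mul_sdiff {C₁ C₂ : Finset V} (hC₂ : (C₂ : Set V).Pairwise G.Adj)
    (hsub : C₁ ⊆ C₂) :
    cliqueWord cs C₂ = cliqueWord cs C₁ * cliqueWord cs (C₂ \ C₁) := by
  rw [cliqueWord, cliqueWord, cliqueWord, dif_pos hC₂,
    dif_pos (hC₂.mono (Finset.coe_subset.2 hsub)),
    dif_pos (hC₂.mono (Finset.coe_subset.2 Finset.sdiff_subset)),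
    ← Finset.noncommProd_union_of_disjoint Finset.disjoint_sdiff]
  exact Finset.noncommProd_congr (Finset.union_sdiff_of_subset hsub).symm (fun _ _ => rfl) _

end RACG

theorem length_sub_subclique
    {V : Type*} [DecidableEq V] (G : SimpleGraph V) [DecidableRel G.Adj]
    {W : Type*} [Group W] (cs : CoxeterSystem (RACG.racgMatrix G) W)
    (C₁ C₂ : Finset V) (hC₂ : (C₂ : Set V).Pairwise G.Adj) (hsub : C₁ ⊆ C₂)
    (r₁ r₂ : W)
    (hr₁ : r₁ = RACG.cliqueWord cs C₁) (hr₂ : r₂ = RACG.cliqueWord cs C₂)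
    (x g : W)
    (hx : cs.length (x * r₂) = cs.length x - C₂.card)
    (hg : cs.length (x * r₂) = cs.length g + cs.length (g * x * r₂)) :
    cs.length (x * r₁) = cs.length x - C₁.card ∧
      cs.length (x * r₁) = cs.length g + cs.length (g * x * r₁) := by
  set r' := RACG.cliqueWord cs (C₂ \ C₁)
  have hr : r₂ = r₁ * r' := by rw [hr₁, hr₂, RACG.cliqueWord_eq_mul_sdiff cs hC₂ hsub]
  have hℓ₁ : cs.length r₁ = C₁.card :=
    hr₁ ▸ RACG.length_cliqueWord cs (hC₂.mono (Finset.coe_subset.2 hsub))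
  have hℓ₂ : cs.length r₂ = C₂.card := hr₂ ▸ RACG.length_cliqueWord cs hC₂
  have hℓ' : cs.length r' = C₂.card - C₁.card := by
    rw [RACG.length_cliqueWord cs (hC₂.mono (Finset.coe_subset.2 Finset.sdiff_subset)),
      Finset.card_sdiff_of_subset hsub]
  have hred : cs.length (r₁ * r') = cs.length r₁ + cs.length r' := by
    have := Finset.card_le_card hsub
    rw [← hr]
    omega
  have hx' := cs.length_mul_add_length_eq_of_eq_sub (w := x) (by rw [hℓ₂]; exact hx)
  rw [hr, ← mul_assoc] at hx'
  obtain ⟨hx₁, hx₁r'⟩ := cs.length_mul_add_length_eq_of_mul_mul hred hx'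
  refine ⟨by omega, ?_⟩
  have hg' : cs.length (x * r₁ * r') = cs.length g + cs.length (g * (x * r₁) * r') := by
    simpa only [hr, mul_assoc] using hg
  simpa only [mul_assoc] using cs.length_eq_add_length_mul_of_length_mul_eq_add hx₁r' hg'
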